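/- arXiv:2207.00197 — 4 statements merged into one kernel-verified Lean document; each statement's English description precedes it below -/
import Mathlib

section
/- Let f ∈ 𝔽_{q^{n}}[t] be a product f = 𝔭₁⋯𝔭_s of polynomials such that each N_n(𝔭_i) is irreducible in 𝔽_q[t] and the N_n(𝔭_i) are pairwise distinct. Then N_n(f) is squarefree in 𝔽_q[t]. Conversely, if N_n(f) is squarefree in 𝔽_q[t], then in any factorization of f into irreducibles 𝔭₁⋯𝔭_s in 𝔽_{q^n}[t], the norms N_n(𝔭_i) are pairwise distinct irreducible polynomials in 𝔽_q[t]. -/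
/-!
A norm is fixed by `φ`, since `φ` permutes its factors cyclically, so it has coefficients in
`𝔽_q`; and it is multiplicative. If `𝔭` is irreducible and `N(𝔭) = g` is squarefree, some prime
factor `P` of `g` over `𝔽_q` is divisible by `𝔭`, hence by every conjugate of `𝔭`, so `g ∣ Pⁿ`,
whence `g ∣ P` and `g` is irreducible. Over finite fields squarefree means separable, which is
invariant under base change, so squarefreeness of `N(f)` can be tested over `𝔽_{q^n}`.
-/

open Polynomial

theorem FiniteField.mem_range_algebraMap_of_pow_card_eq_self {F K : Type*} [Field F] [Fintype F]
    [Field K] [Algebra F K] {x : K} (hx : x ^ Fintype.card F = x) :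
    x ∈ Set.range (algebraMap F K) := by
  have hq : 1 < Fintype.card F := Fintype.one_lt_card
  have hcard : Multiset.card (X ^ Fintype.card F - X : F[X]).roots =
      (X ^ Fintype.card F - X : F[X]).natDegree := by
    rw [roots_X_pow_card_sub_X, X_pow_card_sub_X_natDegree_eq F hq]
    rfl
  have hroots := roots_map_of_injective_of_card_eq_natDegree (algebraMap F K).injective hcard
  have hxroot : x ∈ ((X ^ Fintype.card F - X : F[X]).map (algebraMap F K)).roots := by
    rw [mem_roots (by simpa using X_pow_card_sub_X_ne_zero K hq)]
    simp [hx]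
  rw [← hroots, roots_X_pow_card_sub_X] at hxroot
  obtain ⟨a, -, rfl⟩ := Multiset.mem_map.mp hxroot
  exact ⟨a, rfl⟩

theorem squarefree_list_prod_of_pairwise_not_associated {R : Type*} [CommMonoidWithZero R]
    [IsCancelMulZero R] [DecompositionMonoid R] {l : List R} (hirr : ∀ x ∈ l, Irreducible x)
    (hpair : l.Pairwise (¬ Associated · ·)) : Squarefree l.prod := by
  induction l with
  | nil => simp
  | cons a t ih =>
    obtain ⟨ha, ht⟩ := List.forall_mem_cons.mp hirr
    obtain ⟨hat, hpt⟩ := List.pairwise_cons.mp hpair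
    rw [List.prod_cons, squarefree_mul_iff]
    refine ⟨ha.isRelPrime_iff_not_dvd.mpr fun hdvd => ?_, ha.squarefree, ih ht hpt⟩
    obtain ⟨b, hb, hab⟩ := ha.prime.dvd_prod_iff.mp hdvd
    exact hat b hb (ha.associated_of_dvd (ht b hb) hab)

theorem List.pairwise_not_associated_of_squarefree_prod {R : Type*} [CommMonoid R] {l : List R}
    (hsq : Squarefree l.prod) (hl : ∀ x ∈ l, ¬ IsUnit x) : l.Pairwise (¬ Associated · ·) := by
  induction l with
  | nil => exact List.Pairwise.nil
  | cons a t ih =>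
    rw [List.prod_cons] at hsq
    refine List.pairwise_cons.mpr ⟨fun b hb hab => hl a List.mem_cons_self (hsq a ?_),
      ih hsq.of_mul_right fun x hx => hl x (List.mem_cons_of_mem a hx)⟩
    exact mul_dvd_mul_left a (hab.dvd.trans (List.dvd_prod hb))

theorem Polynomial.squarefree_of_squarefree_map {F K : Type*} [Field F] [Field K] (f : F →+* K)
    {g : F[X]} (h : Squarefree (g.map f)) : Squarefree g :=
  fun b hb => (isUnit_map f).mp (h _ (by simpa [Polynomial.map_mul] using map_dvd f hb))

theorem UniqueFactorizationMonoid.exists_prime_dvd_and_dvd_map {A B : Type*}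
    [CommMonoidWithZero A] [UniqueFactorizationMonoid A] [CommMonoidWithZero B] (f : A →* B)
    {a : A} (ha : a ≠ 0) {r : B} (hr : Prime r) (h : r ∣ f a) :
    ∃ P, Prime P ∧ P ∣ a ∧ r ∣ f P := by
  obtain ⟨fs, hfs, hprod⟩ := exists_prime_factors a ha
  have hr_prod : r ∣ (fs.map f).prod := by
    rw [← map_multiset_prod]
    exact h.trans (hprod.map f).symm.dvd
  obtain ⟨_, hy, hry⟩ := hr.exists_mem_multiset_dvd hr_prod
  obtain ⟨P, hP, rfl⟩ := Multiset.mem_map.mp hy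
  exact ⟨P, hfs P hP, (Multiset.dvd_prod hP).trans hprod.dvd, hry⟩

namespace Polynomial

section TwistedNorm

variable {K : Type*} [Field K] (σ : K →+* K) (n : ℕ)

noncomputable def twistedNorm : K[X] →* K[X] where
  toFun f := ∏ i ∈ Finset.range n, f.map (σ ^ i)
  map_one' := by simp
  map_mul' f g := by simp [Polynomial.map_mul, Finset.prod_mul_distrib]

variable {σ n}

theorem twistedNorm_apply (f : K[X]) : twistedNorm σ n f = ∏ i ∈ Finset.range n, f.map (σ ^ i) :=
  rfl

theorem dvd_twistedNorm (hn : n ≠ 0) (f : K[X]) : f ∣ twistedNorm σ n f := by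
  rw [twistedNorm_apply]
  simpa [RingHom.one_def] using
    Finset.dvd_prod_of_mem (fun i => f.map (σ ^ i)) (Finset.mem_range.mpr hn.bot_lt)

theorem not_isUnit_twistedNorm (hn : n ≠ 0) {r : K[X]} (hr : Irreducible r) :
    ¬ IsUnit (twistedNorm σ n r) :=
  fun h => hr.not_isUnit (isUnit_of_dvd_unit (dvd_twistedNorm hn r) h)

theorem map_twistedNorm (hσ : σ ^ n = 1) (f : K[X]) :
    (twistedNorm σ n f).map σ = twistedNorm σ n f := by
  rcases eq_or_ne f 0 with rfl | hf
  · rcases n with _ | n <;> simp [twistedNorm_apply]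
  have hshift : ∀ i, (f.map (σ ^ i)).map σ = f.map (σ ^ (i + 1)) := fun i => by
    rw [map_map, pow_succ']; rfl
  apply mul_right_cancel₀ hf
  calc (twistedNorm σ n f).map σ * f
      = ∏ i ∈ Finset.range (n + 1), f.map (σ ^ i) := by
        simp [twistedNorm_apply, Polynomial.map_prod, hshift, Finset.prod_range_succ',
          RingHom.one_def]
    _ = twistedNorm σ n f * f := by
        simp [twistedNorm_apply, Finset.prod_range_succ, hσ, RingHom.one_def]

variable {F : Type*} [Field F] [Algebra F K]

theorem twistedNorm_mem_lifts (hσ : σ ^ n = 1)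
    (hfix : ∀ x, σ x = x → x ∈ Set.range (algebraMap F K)) (f : K[X]) :
    twistedNorm σ n f ∈ lifts (algebraMap F K) := by
  refine (lifts_iff_coeff_lifts _).mpr fun k => hfix _ ?_
  conv_rhs => rw [← map_twistedNorm hσ f]
  rw [coeff_map]

theorem twistedNorm_dvd_pow_of_dvd_map (hσF : σ.comp (algebraMap F K) = algebraMap F K)
    {r : K[X]} {P : F[X]} (h : r ∣ P.map (algebraMap F K)) :
    twistedNorm σ n r ∣ P.map (algebraMap F K) ^ n := by
  have hσi : ∀ i, (σ ^ i).comp (algebraMap F K) = algebraMap F K := fun i => by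
    induction i with
    | zero => exact RingHom.id_comp _
    | succ i ih => rw [pow_succ', RingHom.mul_def, RingHom.comp_assoc, ih, hσF]
  rw [twistedNorm_apply, Finset.pow_eq_prod_const]
  refine Finset.prod_dvd_prod_of_dvd _ _ fun i _ => ?_
  simpa [map_map, hσi] using map_dvd (σ ^ i) h

theorem irreducible_of_map_eq_twistedNorm (hσF : σ.comp (algebraMap F K) = algebraMap F K)
    (hn : n ≠ 0) {r : K[X]} (hr : Irreducible r) {g : F[X]}
    (hg : g.map (algebraMap F K) = twistedNorm σ n r) (hsq : Squarefree (twistedNorm σ n r)) :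
    Irreducible g := by
  have hgsq : Squarefree g := squarefree_of_squarefree_map _ (hg ▸ hsq)
  obtain ⟨P, hP, hPg, hrP⟩ := UniqueFactorizationMonoid.exists_prime_dvd_and_dvd_map
    (mapRingHom (algebraMap F K)).toMonoidHom hgsq.ne_zero hr.prime
    (by simpa [hg] using dvd_twistedNorm hn r)
  have hgP : g ∣ P ^ n := (map_dvd_map' (algebraMap F K)).mp <| by
    rw [Polynomial.map_pow, hg]
    exact twistedNorm_dvd_pow_of_dvd_map hσF hrP
  exact (associated_of_dvd_dvd hPg ((hgsq.dvd_pow_iff_dvd hn).mp hgP)).irreducible hP.irreducible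

end TwistedNorm

end Polynomial

theorem stmt4_general (n : ℕ) (hn : 0 < n)
    (Fq K : Type) [Field Fq] [Field K] [Algebra Fq K] [Fintype Fq] [Fintype K]
    (q : ℕ)
    (hcardq : Fintype.card Fq = q) (hcardK : Fintype.card K = q ^ n)
    (φ : K →+* K) (hφ : ∀ x : K, φ x = x ^ q)
    (Nn : Polynomial K → Polynomial K)
    (hN : ∀ f, Nn f = ∏ i ∈ Finset.range n, f.map (φ ^ i)) :
    (∀ (l : List (Polynomial K)) (g : Polynomial Fq),
        (∀ r ∈ l, ∃ gr : Polynomial Fq, gr.map (algebraMap Fq K) = Nn r ∧ Irreducible gr) →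
        l.Pairwise (fun r s => ¬ Associated (Nn r) (Nn s)) →
        g.map (algebraMap Fq K) = Nn l.prod →
        Squarefree g) ∧
    (∀ (l : List (Polynomial K)) (g : Polynomial Fq),
        (∀ r ∈ l, Irreducible r) →
        g.map (algebraMap Fq K) = Nn l.prod →
        Squarefree g →
        (∀ r ∈ l, ∃ gr : Polynomial Fq, gr.map (algebraMap Fq K) = Nn r ∧ Irreducible gr) ∧
        l.Pairwise (fun r s => ¬ Associated (Nn r) (Nn s))) := by
  subst hcardq
  have hφF : φ.comp (algebraMap Fq K) = algebraMap Fq K := RingHom.ext fun a => by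
    rw [RingHom.comp_apply, hφ, ← map_pow, FiniteField.pow_card]
  have hφn : φ ^ n = 1 := RingHom.ext fun x => by
    rw [RingHom.coe_pow, funext hφ, pow_iterate, ← hcardK]
    exact FiniteField.pow_card x
  have hfix (x : K) (hx : φ x = x) : x ∈ Set.range (algebraMap Fq K) :=
    FiniteField.mem_range_algebraMap_of_pow_card_eq_self (hφ x ▸ hx)
  obtain rfl : Nn = twistedNorm φ n := funext hN
  refine ⟨fun l g hlift hpair hg => ?_, fun l g hirr hg hsq => ?_⟩
  · choose! G hGmap hGirr using hlift
    have hgG : g = (l.map G).prod := map_injective _ (algebraMap Fq K).injective <| by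
      rw [hg, map_list_prod, Polynomial.map_list_prod, List.map_map]
      exact congrArg List.prod (List.map_congr_left fun r hr => (hGmap r hr).symm)
    rw [hgG]
    refine squarefree_list_prod_of_pairwise_not_associated (by simpa using hGirr) ?_
    rw [List.pairwise_map]
    exact hpair.imp_of_mem fun hr hs hrs h =>
      hrs (by simpa [hGmap _ hr, hGmap _ hs] using h.map (mapRingHom (algebraMap Fq K)))
  · have hsqN : Squarefree (l.map (twistedNorm φ n)).prod := by
      rw [← map_list_prod, ← hg]
      exact (PerfectField.separable_iff_squarefree.mpr hsq).map.squarefree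
    refine ⟨fun r hr => ?_, ?_⟩
    · obtain ⟨gr, hgr⟩ := (mem_lifts _).mp (twistedNorm_mem_lifts hφn hfix r)
      exact ⟨gr, hgr, irreducible_of_map_eq_twistedNorm hφF hn.ne' (hirr r hr) hgr
        (hsqN.squarefree_of_dvd (List.dvd_prod (List.mem_map_of_mem hr)))⟩
    · refine List.pairwise_map.mp (List.pairwise_not_associated_of_squarefree_prod hsqN ?_)
      simpa using fun r hr => not_isUnit_twistedNorm hn.ne' (hirr r hr)

theorem stmt4 (p m n : ℕ) [Fact p.Prime] (hm : 0 < m) (hn : 0 < n)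
    (Fq K : Type) [Field Fq] [Field K] [Algebra Fq K] [Fintype Fq] [Fintype K]
    (q : ℕ) (hq : q = p ^ m)
    (hcardq : Fintype.card Fq = q) (hcardK : Fintype.card K = q ^ n)
    (φ : K →+* K) (hφ : ∀ x : K, φ x = x ^ q)
    (Nn : Polynomial K → Polynomial K)
    (hN : ∀ f, Nn f = ∏ i ∈ Finset.range n, f.map (φ ^ i)) :
    (∀ (l : List (Polynomial K)) (g : Polynomial Fq),
        (∀ r ∈ l, ∃ gr : Polynomial Fq, gr.map (algebraMap Fq K) = Nn r ∧ Irreducible gr) →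
        l.Pairwise (fun r s => ¬ Associated (Nn r) (Nn s)) →
        g.map (algebraMap Fq K) = Nn l.prod →
        Squarefree g) ∧
    (∀ (l : List (Polynomial K)) (g : Polynomial Fq),
        (∀ r ∈ l, Irreducible r) →
        g.map (algebraMap Fq K) = Nn l.prod →
        Squarefree g →
        (∀ r ∈ l, ∃ gr : Polynomial Fq, gr.map (algebraMap Fq K) = Nn r ∧ Irreducible gr) ∧
        l.Pairwise (fun r s => ¬ Associated (Nn r) (Nn s))) :=
  stmt4_general n hn Fq K q hcardq hcardK φ hφ Nn hN
end

section
/- Let ℓ be an odd prime, q coprime to ℓ, n_q the order of q mod ℓ, and ω a primitive complex ℓ-th root of unity. Let R be a set of coset representatives of (ℤ/ℓℤ)* modulo the cyclic subgroup ⟨q⟩. Define Ψ_{ℓ,n_q}(y) = ∏_{j∈R} (y − ∑_{k=0}^{n_q−1} ω^{j q^k}). Then Ψ_{ℓ,n_q}(y)^{n_q} · (y − n_q) = ∏_{j=0}^{ℓ−1} (y − ∑_{k=0}^{n_q−1} ω^{j q^k}), and this polynomial has integer coefficients. -/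
/-!
Write `η_a = ∑_{k < n} ω ^ (a q^k)` for `a ∈ ℤ/ℓ`. Since `q ^ n = 1` in `ℤ/ℓ`, `η_a` only depends
on the coset `a⟨q⟩`; the `n` units of each coset `r⟨q⟩` contribute the factor `y - η_r` `n` times,
and `a = 0` contributes `y - n`.

For integrality, replacing `ω` by another primitive `ℓ`-th root `ω ^ c` permutes the `η_a` via
`a ↦ c a`, so `∏_a (X - η_a)`, built in the `ℓ`-th cyclotomic field, is fixed by the Galois group.
Its coefficients are therefore rational algebraic integers, i.e. integers.
-/

open Polynomial

section Products

variable {M : Type*} [CommMonoid M]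

theorem ZMod.prod_range_natCast {ℓ : ℕ} [NeZero ℓ] (f : ZMod ℓ → M) :
    ∏ j ∈ Finset.range ℓ, f j = ∏ a, f a :=
  Finset.prod_nbij' (↑) ZMod.val (fun _ _ => Finset.mem_univ _)
    (fun a _ => Finset.mem_range.mpr (ZMod.val_lt a))
    (fun _ hj => ZMod.val_cast_of_lt (Finset.mem_range.mp hj))
    (fun a _ => ZMod.natCast_zmod_val a) fun _ _ => rfl

theorem Fintype.prod_eq_mul_prod_units {G₀ : Type*} [GroupWithZero G₀] [Fintype G₀]
    [DecidableEq G₀] (f : G₀ → M) : ∏ a, f a = f 0 * ∏ u : G₀ˣ, f u := by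
  rw [Fintype.prod_eq_mul_prod_compl 0, Finset.prod_subtype {0}ᶜ (p := (· ≠ 0)) (by simp),
    Fintype.prod_equiv unitsEquivNeZero.symm (fun a => f a) (fun u : G₀ˣ => f u) fun _ => rfl]

theorem Fintype.prod_eq_prod_prod_pow {G : Type*} [Group G] [Fintype G] {u : G}
    {R : Finset G} (hR : ∀ x, ∃! r, r ∈ R ∧ ∃ k : ℕ, x = r * u ^ k) (f : G → M) :
    ∏ x, f x = ∏ r ∈ R, ∏ k ∈ Finset.range (orderOf u), f (r * u ^ k) := by
  rw [← Finset.prod_product']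
  symm
  refine Finset.prod_nbij (fun p => p.1 * u ^ p.2) (fun _ _ => Finset.mem_univ _) ?_ ?_
    fun _ _ => rfl
  · rintro ⟨r₁, k₁⟩ h₁ ⟨r₂, k₂⟩ h₂ (h : r₁ * u ^ k₁ = r₂ * u ^ k₂)
    simp only [Finset.coe_product, Set.mem_prod, Finset.mem_coe, Finset.mem_range] at h₁ h₂
    have hr : r₁ = r₂ := (hR _).unique ⟨h₁.1, k₁, rfl⟩ ⟨h₂.1, k₂, h⟩
    subst hr
    exact Prod.ext rfl (pow_injOn_Iio_orderOf h₁.2 h₂.2 (mul_left_cancel h))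
  · intro x _
    obtain ⟨r, ⟨hr, k, rfl⟩, -⟩ := hR x
    refine ⟨(r, k % orderOf u), ?_, by simp [pow_mod_orderOf]⟩
    simpa using ⟨hr, Nat.mod_lt _ (orderOf_pos u)⟩

end Products

section GaussPeriod

variable {ℓ : ℕ} {M : Type*} [CommRing M]

theorem IsPrimitiveRoot.pow_val_natCast {z : M} (hz : IsPrimitiveRoot z ℓ) (m : ℕ) :
    z ^ (m : ZMod ℓ).val = z ^ m := by
  rw [ZMod.val_natCast, hz.eq_orderOf, pow_mod_orderOf]

noncomputable def gaussPeriod (q n : ℕ) (z : M) (a : ZMod ℓ) : M :=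
  ∑ k ∈ Finset.range n, z ^ (a * (q : ZMod ℓ) ^ k).val

variable {q n : ℕ}

@[simp]
theorem gaussPeriod_zero (z : M) : gaussPeriod q n z (0 : ZMod ℓ) = n := by
  simp [gaussPeriod]

theorem map_gaussPeriod {N : Type*} [CommRing N] (f : M →+* N) (z : M) (a : ZMod ℓ) :
    f (gaussPeriod q n z a) = gaussPeriod q n (f z) a := by
  simp [gaussPeriod]

theorem gaussPeriod_pow [NeZero ℓ] {z : M} (hz : IsPrimitiveRoot z ℓ) (b : ℕ) (a : ZMod ℓ) :
    gaussPeriod q n (z ^ b) a = gaussPeriod q n z ((b : ZMod ℓ) * a) := by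
  refine Finset.sum_congr rfl fun k _ => ?_
  rw [← pow_mul, ← hz.pow_val_natCast]
  push_cast [ZMod.natCast_val, ZMod.cast_id]
  ring_nf

theorem gaussPeriod_natCast {z : M} (hz : IsPrimitiveRoot z ℓ) (j : ℕ) :
    gaussPeriod q n z (j : ZMod ℓ) = ∑ k ∈ Finset.range n, z ^ (j * q ^ k) := by
  refine Finset.sum_congr rfl fun k _ => ?_
  rw [← hz.pow_val_natCast (j * q ^ k)]
  push_cast
  rfl

theorem gaussPeriod_mul_pow (hqn : (q : ZMod ℓ) ^ n = 1) (z : M) (a : ZMod ℓ) (k : ℕ) :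
    gaussPeriod q n z (a * (q : ZMod ℓ) ^ k) = gaussPeriod q n z a := by
  have hshift (b : ZMod ℓ) : gaussPeriod q n z (b * (q : ZMod ℓ)) = gaussPeriod q n z b := by
    set t : ℕ → M := fun i => z ^ (b * (q : ZMod ℓ) ^ i).val
    have hperiod : t n = t 0 := by simp [t, hqn]
    have key : ∑ i ∈ Finset.range n, t (i + 1) + t 0 = ∑ i ∈ Finset.range n, t i + t 0 := by
      rw [← Finset.sum_range_succ', Finset.sum_range_succ, hperiod]
    simpa [gaussPeriod, t, mul_assoc, pow_succ'] using add_right_cancel key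
  induction k with
  | zero => simp
  | succ k ih => rw [pow_succ, ← mul_assoc, hshift, ih]

end GaussPeriod

section PeriodPolynomial

variable (ℓ : ℕ) [NeZero ℓ] (q n : ℕ) {M : Type*} [CommRing M]

noncomputable def periodPoly (z : M) : M[X] :=
  ∏ a : ZMod ℓ, (X - C (gaussPeriod q n z a))

variable {ℓ q n}

theorem periodPoly_map {N : Type*} [CommRing N] (f : M →+* N) (z : M) :
    (periodPoly ℓ q n z).map f = periodPoly ℓ q n (f z) := by
  simp only [periodPoly, Polynomial.map_prod, Polynomial.map_sub, map_X, map_C]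
  exact Finset.prod_congr rfl fun a _ => by rw [map_gaussPeriod]

theorem eval_periodPoly (z y : M) :
    (periodPoly ℓ q n z).eval y = ∏ a : ZMod ℓ, (y - gaussPeriod q n z a) := by
  simp [periodPoly, eval_prod]

/-- Replacing `z` by `z ^ c`, with `c` prime to `ℓ`, permutes the periods by `a ↦ c * a`. -/
theorem periodPoly_eq_of_isPrimitiveRoot [IsDomain M] {z z' : M} (hz : IsPrimitiveRoot z ℓ)
    (hz' : IsPrimitiveRoot z' ℓ) : periodPoly ℓ q n z' = periodPoly ℓ q n z := by
  obtain ⟨c, -, rfl⟩ := hz.eq_pow_of_pow_eq_one hz'.pow_eq_one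
  have hc : IsUnit (c : ZMod ℓ) :=
    (ZMod.unitOfCoprime c ((hz.pow_iff_coprime (NeZero.pos ℓ) c).mp hz')).isUnit
  simp only [periodPoly, gaussPeriod_pow hz]
  exact Fintype.prod_equiv (Units.mulLeft hc.unit) _ _ fun _ => rfl

theorem mem_lifts_int_of_forall_map_eq {L : Type*} [Field L] [Algebra ℚ L]
    [FiniteDimensional ℚ L] [IsGalois ℚ L] (Q : L[X])
    (hfix : ∀ σ : Gal(L/ℚ), Q.map (σ : L →+* L) = Q)
    (hint : ∀ m, IsIntegral ℤ (Q.coeff m)) : Q ∈ lifts (algebraMap ℤ L) := by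
  refine (lifts_iff_coeff_lifts Q).mpr fun m => ?_
  obtain ⟨r, hr⟩ : Q.coeff m ∈ Set.range (algebraMap ℚ L) :=
    (IsGalois.mem_range_algebraMap_iff_fixed _).mpr fun σ => by
      conv_rhs => rw [← hfix σ]
      rw [coeff_map]
      rfl
  have hrint : IsIntegral ℤ r := by
    rw [← isIntegral_algebraMap_iff (algebraMap ℚ L).injective, hr]
    exact hint m
  obtain ⟨z, rfl⟩ := IsIntegrallyClosed.isIntegral_iff.mp hrint
  exact ⟨z, by rw [IsScalarTower.algebraMap_apply ℤ ℚ L, hr]⟩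

theorem periodPoly_mem_lifts_int_of_isGalois {L : Type*} [Field L] [Algebra ℚ L]
    [FiniteDimensional ℚ L] [IsGalois ℚ L] {ζ : L} (hζ : IsPrimitiveRoot ζ ℓ) :
    periodPoly ℓ q n ζ ∈ lifts (algebraMap ℤ L) := by
  refine mem_lifts_int_of_forall_map_eq _ (fun σ => ?_) fun m => ?_
  · rw [periodPoly_map]
    exact periodPoly_eq_of_isPrimitiveRoot hζ (hζ.map_of_injective σ.injective)
  · let ζint : integralClosure ℤ L := ⟨ζ, hζ.isIntegral (NeZero.pos ℓ)⟩
    rw [show ζ = algebraMap (integralClosure ℤ L) L ζint from rfl, ← periodPoly_map, coeff_map]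
    exact ((periodPoly ℓ q n ζint).coeff m).2

theorem periodPoly_mem_lifts_int {K : Type*} [Field K] [CharZero K] [IsAlgClosed K] {z : K}
    (hz : IsPrimitiveRoot z ℓ) : periodPoly ℓ q n z ∈ lifts (algebraMap ℤ K) := by
  have : IsCyclotomicExtension {ℓ} ℚ (CyclotomicField ℓ ℚ) :=
    CyclotomicField.isCyclotomicExtension ℓ ℚ
  have : FiniteDimensional ℚ (CyclotomicField ℓ ℚ) :=
    IsCyclotomicExtension.finiteDimensional {ℓ} ℚ _
  have : IsGalois ℚ (CyclotomicField ℓ ℚ) := IsCyclotomicExtension.isGalois {ℓ} ℚ _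
  have hζ := IsCyclotomicExtension.zeta_spec ℓ ℚ (CyclotomicField ℓ ℚ)
  obtain ⟨P, hP⟩ := periodPoly_mem_lifts_int_of_isGalois (q := q) (n := n) hζ
  let φ : CyclotomicField ℓ ℚ →+* K := (IsAlgClosed.lift : CyclotomicField ℓ ℚ →ₐ[ℚ] K)
  refine ⟨P, ?_⟩
  rw [periodPoly_eq_of_isPrimitiveRoot (hζ.map_of_injective φ.injective) hz, ← periodPoly_map,
    ← hP, coe_mapRingHom, coe_mapRingHom, map_map, RingHom.ext_int (φ.comp _) (algebraMap ℤ K)]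

end PeriodPolynomial

theorem stmt9_general (ℓ : ℕ) (hℓ : ℓ.Prime) (q : ℕ)
    (n : ℕ) (hn : n = orderOf (q : ZMod ℓ))
    (ω : ℂ) (hω : IsPrimitiveRoot ω ℓ)
    (u : (ZMod ℓ)ˣ) (hu : (u : ZMod ℓ) = (q : ZMod ℓ))
    (R : Finset (ZMod ℓ)ˣ)
    (hR : ∀ x : (ZMod ℓ)ˣ, ∃! r, r ∈ R ∧ ∃ k : ℕ, x = r * u ^ k)
    (Ψ : ℂ → ℂ)
    (hΨ : ∀ y, Ψ y = ∏ r ∈ R,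
      (y - ∑ k ∈ Finset.range n, ω ^ (((r * u ^ k : (ZMod ℓ)ˣ) : ZMod ℓ)).val)) :
    (∀ y : ℂ, Ψ y ^ n * (y - n)
        = ∏ j ∈ Finset.range ℓ, (y - ∑ k ∈ Finset.range n, ω ^ (j * q ^ k))) ∧
    ∃ P : Polynomial ℤ, ∀ y : ℂ,
      Polynomial.aeval y P
        = ∏ j ∈ Finset.range ℓ, (y - ∑ k ∈ Finset.range n, ω ^ (j * q ^ k)) := by
  have : Fact ℓ.Prime := ⟨hℓ⟩
  have hqn : (q : ZMod ℓ) ^ n = 1 := hn ▸ pow_orderOf_eq_one _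
  have hnu : orderOf u = n := by rw [hn, ← hu, orderOf_units]
  have hcoe (r : (ZMod ℓ)ˣ) (k : ℕ) :
      ((r * u ^ k : (ZMod ℓ)ˣ) : ZMod ℓ) = r * (q : ZMod ℓ) ^ k := by
    rw [Units.val_mul, Units.val_pow_eq_pow_val, hu]
  have hΨ' (y : ℂ) : Ψ y = ∏ r ∈ R, (y - gaussPeriod q n ω (r : ZMod ℓ)) := by
    simp only [hΨ, hcoe, gaussPeriod]
  have hrange (y : ℂ) : ∏ j ∈ Finset.range ℓ, (y - ∑ k ∈ Finset.range n, ω ^ (j * q ^ k)) =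
      (periodPoly ℓ q n ω).eval y := by
    simp only [← gaussPeriod_natCast hω, eval_periodPoly]
    exact ZMod.prod_range_natCast fun a => y - gaussPeriod q n ω a
  refine ⟨fun y => ?_, ?_⟩
  · rw [hrange, eval_periodPoly, Fintype.prod_eq_mul_prod_units,
      Fintype.prod_eq_prod_prod_pow hR, hΨ', ← Finset.prod_pow, hnu]
    simp only [hcoe, gaussPeriod_mul_pow hqn, Finset.prod_const, Finset.card_range,
      gaussPeriod_zero]
    ring
  · obtain ⟨P, hP⟩ := periodPoly_mem_lifts_int (q := q) (n := n) hω
    exact ⟨P, fun y => by rw [hrange, aeval_def, eval₂_eq_eval_map, ← coe_mapRingHom, hP]⟩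

theorem stmt9 (ℓ : ℕ) (hℓ : ℓ.Prime) (hodd : Odd ℓ) (q : ℕ) (hq : Nat.Coprime q ℓ)
    (n : ℕ) (hn : n = orderOf (q : ZMod ℓ))
    (ω : ℂ) (hω : IsPrimitiveRoot ω ℓ)
    (u : (ZMod ℓ)ˣ) (hu : (u : ZMod ℓ) = (q : ZMod ℓ))
    (R : Finset (ZMod ℓ)ˣ)
    (hR : ∀ x : (ZMod ℓ)ˣ, ∃! r, r ∈ R ∧ ∃ k : ℕ, x = r * u ^ k)
    (Ψ : ℂ → ℂ)
    (hΨ : ∀ y, Ψ y = ∏ r ∈ R,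
      (y - ∑ k ∈ Finset.range n, ω ^ (((r * u ^ k : (ZMod ℓ)ˣ) : ZMod ℓ)).val)) :
    (∀ y : ℂ, Ψ y ^ n * (y - n)
        = ∏ j ∈ Finset.range ℓ, (y - ∑ k ∈ Finset.range n, ω ^ (j * q ^ k))) ∧
    ∃ P : Polynomial ℤ, ∀ y : ℂ,
      Polynomial.aeval y P
        = ∏ j ∈ Finset.range ℓ, (y - ∑ k ∈ Finset.range n, ω ^ (j * q ^ k)) :=
  stmt9_general ℓ hℓ q n hn ω hω u hu R hR Ψ hΨ
end

section
/- For an odd prime ℓ, the polynomial Ψ_{ℓ,2}(y) = ∏_{j∈R} (y − (ω^j + ω^{−j})) (the minimal-type polynomial built from sums ω^j + ω^{−j} over coset representatives R of ±1 in (ℤ/ℓℤ)*) satisfies Gauss's formula: Ψ_{ℓ,2}(y) = ∑_{n=0}^{(ℓ−1)/2} (−1)^{⌊(ℓ−1−2n)/4⌋} · C(⌊(ℓ−1+2n)/4⌋, n) · y^n. -/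
/-!
With m = (ℓ - 1) / 2, pairing each unit r with -r and using ω^r ω^(-r) = 1 gives
(x - ω^r)(x - ω^(-r)) = x (x + x⁻¹ - (ω^r + ω^(-r))), so the factorisation
(x - 1) ∏_{u} (x - ω^u) = x^ℓ - 1 becomes x^m (x - 1) Ψ(x + x⁻¹) = x^ℓ - 1.
Pascal's rule shows that the right-hand sides G_m of Gauss's formula satisfy
G_(m+2) = y G_(m+1) - G_m, and by induction x^m (x - 1) G_m(x + x⁻¹) = x^(2m+1) - 1 too.
Every y ≠ 2 is x + x⁻¹ for some x ∉ {0, 1}, so Ψ and G_m agree at infinitely many points.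
-/

open Finset Polynomial

def gaussCoeff (m n : ℕ) : ℤ := (-1) ^ ((m - n) / 2) * ((m + n) / 2).choose n

noncomputable def gaussPoly (m : ℕ) : ℤ[X] := ∑ n ∈ range (m + 1), C (gaussCoeff m n) * X ^ n

lemma gaussCoeff_eq_zero_of_lt {m n : ℕ} (h : m < n) : gaussCoeff m n = 0 := by
  simp [gaussCoeff, Nat.choose_eq_zero_of_lt (by omega : (m + n) / 2 < n)]

lemma gaussCoeff_add_two_zero (m : ℕ) : gaussCoeff (m + 2) 0 = -gaussCoeff m 0 := by
  simp [gaussCoeff, show (m + 2) / 2 = m / 2 + 1 by omega, pow_succ]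

lemma gaussCoeff_add_two_succ (m n : ℕ) :
    gaussCoeff (m + 2) (n + 1) = gaussCoeff (m + 1) n - gaussCoeff m (n + 1) := by
  rcases lt_trichotomy n m with h | rfl | h
  · obtain ⟨k, rfl⟩ := Nat.exists_eq_add_of_lt h
    unfold gaussCoeff
    rw [show (n + k + 1 + 2 - (n + 1)) / 2 = k / 2 + 1 by omega,
      show (n + k + 1 + 1 - n) / 2 = k / 2 + 1 by omega,
      show (n + k + 1 - (n + 1)) / 2 = k / 2 by omega,
      show (n + k + 1 + 2 + (n + 1)) / 2 = (n + k + 1 + (n + 1)) / 2 + 1 by omega,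
      show (n + k + 1 + 1 + n) / 2 = (n + k + 1 + (n + 1)) / 2 by omega, Nat.choose_succ_succ']
    push_cast
    ring
  · simp [gaussCoeff, show (n + 2 + (n + 1)) / 2 = n + 1 by omega,
      show (n + 1 + n) / 2 = n by omega, show (n + (n + 1)) / 2 = n by omega]
  · rw [gaussCoeff_eq_zero_of_lt (by omega : m < n + 1)]
    rcases (Nat.succ_le_of_lt h).eq_or_lt with rfl | h'
    · simp [gaussCoeff, show (m + 2 + (m + 1 + 1)) / 2 = m + 2 by omega,
        show (m + 1 + (m + 1)) / 2 = m + 1 by omega]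
    · rw [gaussCoeff_eq_zero_of_lt h', gaussCoeff_eq_zero_of_lt (by omega), sub_zero]

lemma coeff_gaussPoly (m n : ℕ) : (gaussPoly m).coeff n = gaussCoeff m n := by
  simp only [gaussPoly, finsetSum_coeff, coeff_C_mul_X_pow, sum_ite_eq, mem_range]
  split_ifs with h
  · rfl
  · exact (gaussCoeff_eq_zero_of_lt (by omega)).symm

lemma aeval_gaussPoly {A : Type*} [CommRing A] (y : A) (m : ℕ) :
    aeval y (gaussPoly m) = ∑ n ∈ range (m + 1), (gaussCoeff m n : A) * y ^ n := by
  simp [gaussPoly]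

lemma gaussPoly_zero : gaussPoly 0 = 1 := by
  simp [gaussPoly, gaussCoeff]

lemma gaussPoly_one : gaussPoly 1 = X + 1 := by
  simp [gaussPoly, gaussCoeff, sum_range_succ, add_comm]

lemma gaussPoly_add_two (m : ℕ) : gaussPoly (m + 2) = X * gaussPoly (m + 1) - gaussPoly m := by
  ext (_ | n)
  · simp [coeff_gaussPoly, gaussCoeff_add_two_zero]
  · simp [coeff_gaussPoly, gaussCoeff_add_two_succ]

theorem aeval_add_inv_gaussPoly_mul {K : Type*} [Field K] {x : K} (hx : x ≠ 0) (m : ℕ) :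
    aeval (x + x⁻¹) (gaussPoly m) * (x ^ m * (x - 1)) = x ^ (2 * m + 1) - 1 := by
  induction m using Nat.twoStepInduction with
  | zero => simp [gaussPoly_zero]
  | one =>
    simp only [gaussPoly_one, map_add, aeval_X, map_one]
    field_simp
    ring
  | more m ih₀ ih₁ =>
    rw [gaussPoly_add_two, map_sub, map_mul, aeval_X]
    linear_combination
      x * (x + x⁻¹) * ih₁ - x ^ 2 * ih₀ + (x ^ (2 * m + 3) - 1) * mul_inv_cancel₀ hx

theorem Polynomial.eq_of_eval_add_inv_eq {K : Type*} [Field K] [IsAlgClosed K] {p q : K[X]}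
    (h : ∀ x : K, x ≠ 0 → x ≠ 1 → p.eval (x + x⁻¹) = q.eval (x + x⁻¹)) : p = q := by
  refine eq_of_infinite_eval_eq p q ((Set.finite_singleton (2 : K)).infinite_compl.mono ?_)
  intro y hy
  obtain ⟨x, hx⟩ := IsAlgClosed.exists_root (C 1 * X ^ 2 + C (-y) * X + C 1)
    (by rw [degree_quadratic one_ne_zero]; decide)
  have hquad : x * x - y * x + 1 = 0 := by
    simp only [IsRoot, eval_add, eval_mul, eval_C, eval_pow, eval_X] at hx
    linear_combination hx
  have hx0 : x ≠ 0 := by rintro rfl; simp at hquad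
  have hx1 : x ≠ 1 := by
    rintro rfl
    exact hy (by linear_combination -hquad : y = 2)
  have hxy : x + x⁻¹ = y := by
    field_simp
    linear_combination hquad
  simpa [hxy] using h x hx0 hx1

section Representatives

variable {α : Type*} [DecidableEq α] [InvolutiveNeg α] {R : Finset α}

lemma disjoint_image_neg_of_existsUnique (hR : ∀ x, ∃! r, r ∈ R ∧ (x = r ∨ x = -r))
    (hneg : ∀ x : α, -x ≠ x) : Disjoint R (R.image Neg.neg) := by
  rw [disjoint_right]
  rintro _ hr' hr
  obtain ⟨r, hrR, rfl⟩ := mem_image.1 hr'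
  exact hneg r ((hR r).unique ⟨hr, Or.inr (neg_neg r).symm⟩ ⟨hrR, Or.inl rfl⟩)

lemma union_image_neg_of_existsUnique [Fintype α] (hR : ∀ x, ∃! r, r ∈ R ∧ (x = r ∨ x = -r)) :
    R ∪ R.image Neg.neg = univ := by
  refine eq_univ_of_forall fun x => ?_
  obtain ⟨r, ⟨hrR, rfl | rfl⟩, -⟩ := hR x
  · exact mem_union_left _ hrR
  · exact mem_union_right _ (mem_image_of_mem _ hrR)

lemma prod_univ_eq_prod_mul_neg [Fintype α] {β : Type*} [CommMonoid β]
    (hR : ∀ x, ∃! r, r ∈ R ∧ (x = r ∨ x = -r)) (hneg : ∀ x : α, -x ≠ x) (f : α → β) :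
    ∏ x, f x = ∏ r ∈ R, f r * f (-r) := by
  rw [← union_image_neg_of_existsUnique hR,
    prod_union (disjoint_image_neg_of_existsUnique hR hneg),
    prod_image fun a _ b _ h => neg_injective h, prod_mul_distrib]

lemma card_eq_two_mul_card_of_existsUnique [Fintype α] (hR : ∀ x, ∃! r, r ∈ R ∧ (x = r ∨ x = -r))
    (hneg : ∀ x : α, -x ≠ x) : Fintype.card α = 2 * #R := by
  rw [← card_univ, ← union_image_neg_of_existsUnique hR,
    card_union_of_disjoint (disjoint_image_neg_of_existsUnique hR hneg),
    card_image_of_injective _ neg_injective, two_mul]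

end Representatives

lemma ZMod.units_neg_ne_self {n : ℕ} [Nontrivial (ZMod n)] (hn : Odd n) (u : (ZMod n)ˣ) :
    -u ≠ u := fun h =>
  ZMod.ne_neg_self hn u.ne_zero (by simpa using (congrArg Units.val h).symm)

namespace IsPrimitiveRoot

lemma pow_val_mul_pow_val_neg {M : Type*} [CommMonoid M] {ω : M} {n : ℕ} [NeZero n]
    (hω : IsPrimitiveRoot ω n) (a : ZMod n) : ω ^ a.val * ω ^ (-a).val = 1 := by
  rw [← pow_add, ← pow_mod_orderOf, ← hω.eq_orderOf, ← ZMod.val_add, add_neg_cancel,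
    ZMod.val_zero, pow_zero]

lemma prod_units_X_sub_C_pow_val {K : Type*} [CommRing K] [IsDomain K] {ω : K} {n : ℕ}
    [NeZero n] (hω : IsPrimitiveRoot ω n) :
    ∏ u : (ZMod n)ˣ, (X - C (ω ^ (u : ZMod n).val)) = cyclotomic n K := by
  rw [cyclotomic_eq_prod_X_sub_primitiveRoots hω]
  refine prod_nbij (fun u => ω ^ (u : ZMod n).val) ?_ ?_ ?_ fun _ _ => rfl
  · intro u _
    exact (mem_primitiveRoots (NeZero.pos n)).2
      (hω.pow_of_coprime _ (ZMod.val_coe_unit_coprime u))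
  · intro u _ v _ h
    exact Units.ext (ZMod.val_injective n (hω.pow_inj (ZMod.val_lt _) (ZMod.val_lt _) h))
  · intro ξ hξ
    obtain ⟨i, hin, hi, rfl⟩ := (hω.isPrimitiveRoot_iff).1
      ((mem_primitiveRoots (NeZero.pos n)).1 hξ)
    refine ⟨ZMod.unitOfCoprime i hi, mem_coe.2 (mem_univ _), ?_⟩
    simp [ZMod.val_natCast_of_lt hin]

theorem prod_add_inv_sub_mul_eq_pow_sub_one {K : Type*} [Field K] {ℓ : ℕ} [Fact ℓ.Prime] {ω : K}
    (hω : IsPrimitiveRoot ω ℓ) {R : Finset (ZMod ℓ)ˣ} (hR : ∀ x, ∃! r, r ∈ R ∧ (x = r ∨ x = -r))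
    (hneg : ∀ u : (ZMod ℓ)ˣ, -u ≠ u) {x : K} (hx : x ≠ 0) :
    (∏ r ∈ R, (x + x⁻¹ - (ω ^ (r : ZMod ℓ).val + ω ^ (-(r : ZMod ℓ)).val))) *
      (x ^ #R * (x - 1)) = x ^ ℓ - 1 := by
  have hpair : ∀ r ∈ R, (x - ω ^ (r : ZMod ℓ).val) * (x - ω ^ ((-r : (ZMod ℓ)ˣ) : ZMod ℓ).val) =
      x * (x + x⁻¹ - (ω ^ (r : ZMod ℓ).val + ω ^ (-(r : ZMod ℓ)).val)) := fun r _ => by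
    rw [Units.val_neg]
    linear_combination hω.pow_val_mul_pow_val_neg (r : ZMod ℓ) - mul_inv_cancel₀ hx
  have hcyc := congrArg (eval x) (cyclotomic_prime_mul_X_sub_one K ℓ)
  rw [← hω.prod_units_X_sub_C_pow_val] at hcyc
  simp only [eval_mul, eval_prod, eval_sub, eval_X, eval_C, eval_pow, eval_one] at hcyc
  rw [← hcyc, prod_univ_eq_prod_mul_neg hR hneg, prod_congr rfl hpair, prod_mul_distrib,
    prod_const]
  ring

end IsPrimitiveRoot

theorem stmt10 (ℓ : ℕ) (hℓ : ℓ.Prime) (hodd : Odd ℓ)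
    (ω : ℂ) (hω : IsPrimitiveRoot ω ℓ)
    (R : Finset (ZMod ℓ)ˣ)
    (hR : ∀ x : (ZMod ℓ)ˣ, ∃! r, r ∈ R ∧ (x = r ∨ x = -r))
    (Ψ : ℂ → ℂ)
    (hΨ : ∀ y, Ψ y = ∏ r ∈ R, (y - (ω ^ ((r : ZMod ℓ)).val + ω ^ ((-(r : ZMod ℓ) : ZMod ℓ)).val))) :
    ∀ y : ℂ, Ψ y = ∑ n ∈ Finset.range ((ℓ - 1) / 2 + 1),
      (-1 : ℂ) ^ ((ℓ - 1 - 2 * n) / 4) * (Nat.choose ((ℓ - 1 + 2 * n) / 4) n) * y ^ n := by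
  have := Fact.mk hℓ
  set m := (ℓ - 1) / 2
  have hneg := ZMod.units_neg_ne_self hodd
  have hcard : #R = m := by
    have := card_eq_two_mul_card_of_existsUnique hR hneg
    rw [ZMod.card_units] at this
    omega
  have hℓm : ℓ = 2 * m + 1 := by obtain ⟨k, rfl⟩ := hodd; omega
  have hpoly : ∏ r ∈ R, (X - C (ω ^ (r : ZMod ℓ).val + ω ^ (-(r : ZMod ℓ)).val)) =
      (gaussPoly m).map (algebraMap ℤ ℂ) := by
    refine eq_of_eval_add_inv_eq fun x hx0 hx1 => mul_right_cancel₀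
      (mul_ne_zero (pow_ne_zero m hx0) (sub_ne_zero.2 hx1)) ?_
    simp only [eval_prod, eval_sub, eval_X, eval_C, eval_map_algebraMap]
    rw [aeval_add_inv_gaussPoly_mul hx0, ← hℓm, ← hcard,
      hω.prod_add_inv_sub_mul_eq_pow_sub_one hR hneg hx0]
  intro y
  calc Ψ y = (∏ r ∈ R, (X - C (ω ^ (r : ZMod ℓ).val + ω ^ (-(r : ZMod ℓ)).val))).eval y := by
        simp only [hΨ, eval_prod, eval_sub, eval_X, eval_C]
    _ = ∑ n ∈ range (m + 1), (gaussCoeff m n : ℂ) * y ^ n := by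
        rw [hpoly, eval_map_algebraMap, aeval_gaussPoly]
    _ = _ := sum_congr rfl fun n _ => by
        rw [gaussCoeff, show (ℓ - 1 - 2 * n) / 4 = (m - n) / 2 by omega,
          show (ℓ - 1 + 2 * n) / 4 = (m + n) / 2 by omega]
        push_cast
        rfl
end

section
/- Let ℓ be a prime, q a prime power with q ≡ 1 (mod ℓ). Let F ∈ 𝔽_q[t] be monic squarefree with factorization into coprime squarefree monic parts F = F₁ F₂ ⋯ F_{ℓ−1} and character χ = χ_{F₁} χ_{F₂}² ⋯ χ_{F_{ℓ−1}}^{ℓ−1}, where χ_P(a) is determined by a^{(q^{deg P}−1)/ℓ} mod P. Then the restriction of χ to 𝔽_q* is trivial if and only if ℓ divides deg(F₁ F₂² ⋯ F_{ℓ−1}^{ℓ−1}); more precisely, for a ∈ 𝔽_q*, χ(a) = Ω(a^{deg(F₁F₂²⋯F_{ℓ−1}^{ℓ−1}) (q−1)/ℓ}). -/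
/-!
Write `b = a ^ ((q - 1) / ℓ)`. Since `(q ^ d - 1) / ℓ = ((q - 1) / ℓ) (1 + q + ⋯ + q ^ (d - 1))` and
Frobenius fixes `b`, the exponent `(q ^ d - 1) / ℓ` acts on `a` as `d` copies of `(q - 1) / ℓ`; so
every irreducible factor `P` of `Fᵢ` contributes `Ω b ^ deg P`, and the degrees add up to
`χ a = Ω b ^ D`. As `𝔽_q*` is cyclic of order `q - 1` and `Ω` is injective on `ℓ`-torsion,
`a ↦ Ω (a ^ (D (q - 1) / ℓ))` is trivial exactly when `q - 1 ∣ D (q - 1) / ℓ`, i.e. when `ℓ ∣ D`.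
-/

open Polynomial UniqueFactorizationMonoid

theorem Multiset.prod_map_pow_eq_pow_sum {M α : Type*} [CommMonoid M] (c : M) (f : α → ℕ)
    (m : Multiset α) : (m.map fun x => c ^ f x).prod = c ^ (m.map f).sum := by
  induction m using Multiset.induction with
  | empty => simp
  | cons a s ih => simp [ih, pow_add]

theorem Polynomial.sum_natDegree_normalizedFactors {K : Type*} [Field K] [DecidableEq K]
    (f : K[X]) : ((normalizedFactors f).map natDegree).sum = f.natDegree := by
  rcases eq_or_ne f 0 with rfl | hf
  · simp
  conv_rhs => rw [← leadingCoeff_mul_prod_normalizedFactors f]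
  rw [natDegree_C_mul (leadingCoeff_ne_zero.mpr hf),
    natDegree_multiset_prod _ (zero_notMem_normalizedFactors f)]

theorem FiniteField.units_pow_card_pow_sub_one_div {K : Type*} [Field K] [Fintype K] {ℓ : ℕ}
    (hℓ : ℓ ∣ Fintype.card K - 1) (a : Kˣ) (d : ℕ) :
    a ^ ((Fintype.card K ^ d - 1) / ℓ) = (a ^ ((Fintype.card K - 1) / ℓ)) ^ d := by
  set q := Fintype.card K
  have hexp : (q ^ d - 1) / ℓ = (q - 1) / ℓ * ∑ j ∈ Finset.range d, q ^ j := by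
    rw [← geom_sum_mul_of_one_le Fintype.card_pos, Nat.mul_div_assoc _ hℓ, mul_comm]
  have hfrob (b : Kˣ) (j : ℕ) : b ^ q ^ j = b :=
    Units.ext (by push_cast; exact FiniteField.pow_card_pow j (b : K))
  rw [hexp, pow_mul, ← Finset.prod_pow_eq_pow_sum]
  simp only [hfrob, Finset.prod_const, Finset.card_range]

theorem FiniteField.prod_normalizedFactors_map_pow_card_pow_sub_one_div {K M : Type*} [Field K]
    [Fintype K] [DecidableEq K] [CommMonoid M] {ℓ : ℕ} (hℓ : ℓ ∣ Fintype.card K - 1)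
    (Ω : Kˣ →* M) (a : Kˣ) (f : K[X]) :
    ((normalizedFactors f).map
        fun P => Ω (a ^ ((Fintype.card K ^ P.natDegree - 1) / ℓ))).prod =
      Ω (a ^ ((Fintype.card K - 1) / ℓ)) ^ f.natDegree := by
  simp_rw [units_pow_card_pow_sub_one_div hℓ, map_pow]
  rw [Multiset.prod_map_pow_eq_pow_sum, sum_natDegree_normalizedFactors]

theorem IsCyclic.forall_pow_mul_card_div_eq_one_iff {G : Type*} [Group G] [Finite G]
    [IsCyclic G] {ℓ : ℕ} (hℓ : ℓ ∣ Nat.card G) (D : ℕ) :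
    (∀ a : G, a ^ (D * (Nat.card G / ℓ)) = 1) ↔ ℓ ∣ D := by
  rw [← Monoid.exponent_dvd_iff_forall_pow_eq_one, IsCyclic.exponent_eq_card]
  obtain ⟨k, hk⟩ := hℓ
  have hpos : 0 < ℓ * k := hk ▸ Nat.card_pos
  rw [hk, Nat.mul_div_cancel_left _ (Nat.pos_of_mul_pos_right hpos)]
  exact Nat.mul_dvd_mul_iff_right (Nat.pos_of_mul_pos_left hpos)

theorem IsCyclic.forall_map_pow_mul_card_div_eq_one_iff {G H : Type*} [Group G] [Finite G]
    [IsCyclic G] [Monoid H] {ℓ : ℕ} (hℓ : ℓ ∣ Nat.card G) (Ω : G →* H)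
    (hΩ : ∀ x : G, x ^ ℓ = 1 → Ω x = 1 → x = 1) (D : ℕ) :
    (∀ a : G, Ω (a ^ (D * (Nat.card G / ℓ))) = 1) ↔ ℓ ∣ D := by
  rw [← forall_pow_mul_card_div_eq_one_iff hℓ]
  refine forall_congr' fun a => ⟨fun h => hΩ _ ?_ h, fun h => by rw [h, map_one]⟩
  rw [← pow_mul, mul_assoc, Nat.div_mul_cancel hℓ, pow_mul', pow_card_eq_one', one_pow]

theorem stmt12_general (ℓ : ℕ) (Fq : Type) [Field Fq] [Fintype Fq]
    [DecidableEq Fq]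
    (q : ℕ) (hq : q = Fintype.card Fq) (hql : ℓ ∣ q - 1)
    (Ω : Fqˣ →* ℂˣ)
    (hΩ : ∀ x : Fqˣ, x ^ ℓ = 1 → Ω x = 1 → x = 1)
    (F : ℕ → Polynomial Fq)
    (χ : Fqˣ → ℂˣ)
    (hχ : ∀ a, χ a = ∏ i ∈ Finset.Ico 1 ℓ,
      (((UniqueFactorizationMonoid.normalizedFactors (F i)).map
        (fun P => Ω (a ^ ((q ^ P.natDegree - 1) / ℓ)))).prod) ^ i)
    (D : ℕ) (hD : D = ∑ i ∈ Finset.Ico 1 ℓ, i * (F i).natDegree) :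
    (∀ a : Fqˣ, χ a = Ω (a ^ (D * ((q - 1) / ℓ)))) ∧
    ((∀ a : Fqˣ, χ a = 1) ↔ ℓ ∣ D) := by
  subst hq
  have hχ_eq (a : Fqˣ) : χ a = Ω (a ^ (D * ((Fintype.card Fq - 1) / ℓ))) := by
    rw [hχ, hD, pow_mul', map_pow, ← Finset.prod_pow_eq_pow_sum]
    refine Finset.prod_congr rfl fun i _ => ?_
    rw [FiniteField.prod_normalizedFactors_map_pow_card_pow_sub_one_div hql, ← pow_mul, mul_comm]
  have hcard : Nat.card Fqˣ = Fintype.card Fq - 1 := by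
    rw [Nat.card_units, Nat.card_eq_fintype_card]
  refine ⟨hχ_eq, ?_⟩
  simp_rw [hχ_eq, ← hcard]
  exact IsCyclic.forall_map_pow_mul_card_div_eq_one_iff (hcard ▸ hql) Ω hΩ D

theorem stmt12 (ℓ : ℕ) (hℓ : ℓ.Prime) (Fq : Type) [Field Fq] [Fintype Fq]
    [DecidableEq Fq] [DecidableEq (Polynomial Fq)]
    (q : ℕ) (hq : q = Fintype.card Fq) (hql : ℓ ∣ q - 1)
    (Ω : Fqˣ →* ℂˣ)
    (hΩ : ∀ x : Fqˣ, x ^ ℓ = 1 → Ω x = 1 → x = 1)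
    (F : ℕ → Polynomial Fq)
    (hmonic : ∀ i ∈ Finset.Ico 1 ℓ, (F i).Monic)
    (hsqf : ∀ i ∈ Finset.Ico 1 ℓ, Squarefree (F i))
    (hcop : ∀ i ∈ Finset.Ico 1 ℓ, ∀ j ∈ Finset.Ico 1 ℓ, i ≠ j → IsCoprime (F i) (F j))
    (χ : Fqˣ → ℂˣ)
    (hχ : ∀ a, χ a = ∏ i ∈ Finset.Ico 1 ℓ,
      (((UniqueFactorizationMonoid.normalizedFactors (F i)).map
        (fun P => Ω (a ^ ((q ^ P.natDegree - 1) / ℓ)))).prod) ^ i)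
    (D : ℕ) (hD : D = ∑ i ∈ Finset.Ico 1 ℓ, i * (F i).natDegree) :
    (∀ a : Fqˣ, χ a = Ω (a ^ (D * ((q - 1) / ℓ)))) ∧
    ((∀ a : Fqˣ, χ a = 1) ↔ ℓ ∣ D) :=
  stmt12_general ℓ Fq q hq hql Ω hΩ F χ hχ D hD
end
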